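/- arXiv:math/0511711 — 4 statements merged into one kernel-verified Lean document; each statement's English description precedes it below -/
import Mathlib

section
/- Let n ≥ 1 and let r be a natural number with n ≤ r ≤ 2n − 1. Then for every natural number l ≥ 0 one has 2n·C(l+n−1, l) ≥ r·C(l+2n−r−1, l). -/
theorem complex_pseudogroup_dim_trans_general (n r : ℕ) (hnr : n ≤ r)
    (hr : r ≤ 2 * n - 1) :
    ∀ l : ℕ, 2 * n * Nat.choose (l + n - 1) l ≥ r * Nat.choose (l + 2 * n - r - 1) l := by
  intro l
  have hcodim : r ≤ 2 * n := by omega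
  have htop : l + 2 * n - r - 1 ≤ l + n - 1 := by omega
  exact Nat.mul_le_mul hcodim (Nat.choose_le_choose l htop)

/-- For the pseudogroup of local holomorphic transformations of a complex `n`-dimensional
manifold acting on real codimension-`r` submanifolds with `n ≤ r ≤ 2n - 1`, the
transversality dimension inequality `dim g^l ≥ dim h^l` holds for all `l`. -/
theorem complex_pseudogroup_dim_trans (n r : ℕ) (hn : 1 ≤ n) (hnr : n ≤ r)
    (hr : r ≤ 2 * n - 1) :
    ∀ l : ℕ, 2 * n * Nat.choose (l + n - 1) l ≥ r * Nat.choose (l + 2 * n - r - 1) l :=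
  complex_pseudogroup_dim_trans_general n r hnr hr
end

section
/- Let n ≥ 1 and let r be a natural number with 1 ≤ r ≤ 2n − 1. Then for every natural number l ≥ 0 one has C(l+2n, l+1) ≥ r·C(l+2n−r−1, l). -/
/-! Each of `r` Pascal steps from row `m` to row `m + r` adds an entry `C(k, l) ≥ C(m, l)` to
`C(·, l + 1)`, so `r * C(m, l) ≤ C(m + r, l + 1)`. With `m = l + 2n - r - 1` the right side is
at most `C(l + 2n, l + 1)`. -/

theorem Nat.mul_choose_le_choose_add (m l : ℕ) :
    ∀ r : ℕ, r * m.choose l ≤ (m + r).choose (l + 1)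
  | 0 => by simp
  | r + 1 => by
    have ih := Nat.mul_choose_le_choose_add m l r
    have hmono : m.choose l ≤ (m + r).choose l := Nat.choose_le_choose l (Nat.le_add_right m r)
    calc (r + 1) * m.choose l = r * m.choose l + m.choose l := Nat.succ_mul r _
      _ ≤ (m + r).choose (l + 1) + (m + r).choose l := Nat.add_le_add ih hmono
      _ = (m + (r + 1)).choose (l + 1) := by
        rw [← Nat.add_assoc, Nat.choose_succ_succ', Nat.add_comm]

theorem symplectic_pseudogroup_dim_trans_general (n r : ℕ)
    (hr2 : r ≤ 2 * n - 1) :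
    ∀ l : ℕ, Nat.choose (l + 2 * n) (l + 1) ≥ r * Nat.choose (l + 2 * n - r - 1) l := by
  intro l
  calc r * Nat.choose (l + 2 * n - r - 1) l
      ≤ (l + 2 * n - r - 1 + r).choose (l + 1) := Nat.mul_choose_le_choose_add _ _ r
    _ ≤ (l + 2 * n).choose (l + 1) := Nat.choose_le_choose _ (by omega)

/-- For the symplectomorphism pseudogroup of a `2n`-dimensional symplectic manifold acting on
codimension-`r` submanifolds (`1 ≤ r ≤ 2n - 1`), the transversality dimension inequality
`dim g^l ≥ dim h^l` holds for all `l`. -/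
theorem symplectic_pseudogroup_dim_trans (n r : ℕ) (hn : 1 ≤ n) (hr1 : 1 ≤ r)
    (hr2 : r ≤ 2 * n - 1) :
    ∀ l : ℕ, Nat.choose (l + 2 * n) (l + 1) ≥ r * Nat.choose (l + 2 * n - r - 1) l :=
  symplectic_pseudogroup_dim_trans_general n r hr2
end

section
/- Let n ≥ 1 and let r be a natural number with 1 ≤ r ≤ 2n. Then for every natural number l ≥ 0 one has C(l+2n+1, l+1) ≥ r·C(l+2n−r, l). -/
open Finset

/-- Each of the `r` binomials `i.choose l` with `m - r ≤ i < m` is at least `(m - r).choose l`,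
and by the hockey-stick identity all of them together are at most `(m + 1).choose (l + 1)`. -/
theorem Nat.mul_choose_sub_le_choose_succ_succ {r m : ℕ} (h : r ≤ m) (l : ℕ) :
    r * (m - r).choose l ≤ (m + 1).choose (l + 1) :=
  calc r * (m - r).choose l
      = #(Ico (m - r) m) • (m - r).choose l := by rw [Nat.card_Ico, smul_eq_mul]; congr; omega
    _ ≤ ∑ i ∈ Ico (m - r) m, i.choose l :=
        card_nsmul_le_sum _ _ _ fun i hi ↦ Nat.choose_le_choose l (mem_Ico.1 hi).1
    _ ≤ ∑ i ∈ Icc l m, i.choose l := by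
        refine sum_le_sum_of_ne_zero fun i hi hne ↦ mem_Icc.2 ⟨?_, (mem_Ico.1 hi).2.le⟩
        by_contra! hlt
        exact hne (Nat.choose_eq_zero_of_lt hlt)
    _ = (m + 1).choose (l + 1) := Nat.sum_Icc_choose m l

theorem contact_pseudogroup_dim_trans_general (n r : ℕ)
    (hr2 : r ≤ 2 * n) :
    ∀ l : ℕ, Nat.choose (l + 2 * n + 1) (l + 1) ≥ r * Nat.choose (l + 2 * n - r) l :=
  fun l ↦ Nat.mul_choose_sub_le_choose_succ_succ (by omega) l

/-- For the contactomorphism pseudogroup of a `(2n+1)`-dimensional contact manifold acting on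
codimension-`r` submanifolds (`1 ≤ r ≤ 2n`), the transversality dimension inequality
`dim g^l ≥ dim h^l` holds for all `l`. -/
theorem contact_pseudogroup_dim_trans (n r : ℕ) (hn : 1 ≤ n) (hr1 : 1 ≤ r)
    (hr2 : r ≤ 2 * n) :
    ∀ l : ℕ, Nat.choose (l + 2 * n + 1) (l + 1) ≥ r * Nat.choose (l + 2 * n - r) l :=
  contact_pseudogroup_dim_trans_general n r hr2
end

section
/- Let n ≥ 1, r ≥ 1, k ≥ 1 be natural numbers and for l ∈ ℕ define D(l) = n·[ C(l+r−1, r−1) + (Σ_{i=1}^{k−1} C(i+n−1, n−1))·C(l+r−2, r−1) + Σ_{i=k}^{k+l−1} C(i+n−1, n−1)·C(k+l−i+r−2, r−1) ] + r·[ (Σ_{i=0}^{k−1} C(i+n−1, n−1))·C(l+r−1, r−1) + Σ_{i=k}^{k+l} C(i+n−1, n−1)·C(k+l−i+r−1, r−1) ]. Then, as l → ∞, D(l)·(n+r−1)! / l^{n+r−1} tends to n+r; that is, D(l) is asymptotically equivalent to (n+r)·l^{n+r−1}/(n+r−1)!. -/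
open Filter Finset


lemma vand (a b : ℕ) : ∀ L : ℕ,
    ∑ j ∈ range (L + 1), (j + a).choose a * (L - j + b).choose b
      = (L + a + b + 1).choose (a + b + 1) := by
  induction b with
  | zero =>
    intro L
    induction L with
    | zero => simp
    | succ L ih =>
      rw [sum_range_succ]
      simp only [Nat.choose_zero_right, mul_one, Nat.add_zero] at ih ⊢
      rw [ih]
      have h0 := Nat.choose_succ_succ' (L + a + 1) a
      have h1 : L + 1 + a + 1 = L + a + 1 + 1 := by omega
      have h2 : L + 1 + a = L + a + 1 := by omega
      rw [h1, h2, h0]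
      omega
  | succ b ihb =>
    intro L
    induction L with
    | zero => simp
    | succ L ihL =>
      rw [sum_range_succ]
      have h1 : ∀ j ∈ range (L + 1),
          (j + a).choose a * (L + 1 - j + (b + 1)).choose (b + 1)
            = (j + a).choose a * (L - j + (b + 1)).choose (b + 1)
              + (j + a).choose a * (L - j + (b + 1)).choose b := by
        intro j hj
        rw [mem_range] at hj
        have h2 : L + 1 - j + (b + 1) = (L - j + (b + 1)) + 1 := by omega
        rw [h2, Nat.choose_succ_succ']
        ring
      rw [sum_congr rfl h1, sum_add_distrib, ihL]
      simp only [Nat.sub_self, Nat.zero_add, Nat.choose_self, mul_one]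
      have h3 : ∑ j ∈ range (L + 1), (j + a).choose a * (L - j + (b + 1)).choose b
            + (L + 1 + a).choose a
          = (L + 1 + a + b + 1).choose (a + b + 1) := by
        have h4 := ihb (L + 1)
        rw [sum_range_succ] at h4
        have h5 : ∀ j ∈ range (L + 1),
            (j + a).choose a * (L + 1 - j + b).choose b
              = (j + a).choose a * (L - j + (b + 1)).choose b := by
          intro j hj
          rw [mem_range] at hj
          congr 2
          omega
        rw [sum_congr rfl h5] at h4
        simpa using h4
      rw [Nat.add_assoc, h3]
      have h6 := Nat.choose_succ_succ' (L + a + b + 2) (a + b + 1)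
      have e1 : L + a + (b + 1) + 1 = L + a + b + 2 := by omega
      have e2 : a + (b + 1) + 1 = a + b + 1 + 1 := by omega
      have e3 : L + 1 + a + b + 1 = L + a + b + 2 := by omega
      have e4 : L + 1 + a + (b + 1) + 1 = L + a + b + 2 + 1 := by omega
      rw [e1, e2, e3, e4, h6]
      omega


lemma lim_one (c d : ℕ) :
    Tendsto (fun l : ℕ => ((l + c).choose d : ℝ) * (Nat.factorial d : ℝ) / (l : ℝ) ^ d)
      atTop (nhds 1) := by
  have key : ∀ l : ℕ, ((l + c).choose d : ℝ) * (Nat.factorial d : ℝ)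
      = ∏ i ∈ range d, ((l + c - i : ℕ) : ℝ) := by
    intro l
    rw [← Nat.cast_prod, ← Nat.descFactorial_eq_prod_range,
      Nat.descFactorial_eq_factorial_mul_choose]
    push_cast
    ring
  have key2 : ∀ l : ℕ, ((l + c).choose d : ℝ) * (Nat.factorial d : ℝ) / (l : ℝ) ^ d
      = ∏ i ∈ range d, (((l + c - i : ℕ) : ℝ) / (l : ℝ)) := by
    intro l
    rw [prod_div_distrib, ← key, prod_const, card_range]
  simp only [key2]
  have h1 : Tendsto (fun l : ℕ => ∏ i ∈ range d, (((l + c - i : ℕ) : ℝ) / (l : ℝ)))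
      atTop (nhds (∏ _i ∈ range d, (1 : ℝ))) := by
    apply tendsto_finset_prod
    intro i _
    have hb : Tendsto (fun l : ℕ => 1 + ((c : ℝ) - i) / (l : ℝ)) atTop (nhds 1) := by
      have h := (tendsto_const_div_atTop_nhds_zero_nat ((c : ℝ) - i)).const_add 1
      simpa using h
    refine hb.congr' ?_
    filter_upwards [eventually_ge_atTop (i + 1)] with l hl
    have hl0 : (l : ℝ) ≠ 0 := by
      simpa using (by omega : l ≠ 0)
    rw [Nat.cast_sub (by omega : i ≤ l + c)]
    push_cast
    field_simp
    ring
  simpa using h1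

lemma lim_zero (c d e : ℕ) (h : d < e) :
    Tendsto (fun l : ℕ => ((l + c).choose d : ℝ) * (Nat.factorial e : ℝ) / (l : ℝ) ^ e)
      atTop (nhds 0) := by
  have h2 : Tendsto (fun l : ℕ => ((l : ℝ) ^ (e - d))⁻¹) atTop (nhds 0) := by
    apply Tendsto.inv_tendsto_atTop
    exact (tendsto_pow_atTop (by omega : e - d ≠ 0)).comp tendsto_natCast_atTop_atTop
  have h3 : Tendsto (fun l : ℕ =>
      (((l + c).choose d : ℝ) * (Nat.factorial d : ℝ) / (l : ℝ) ^ d) * ((Nat.factorial e : ℝ) / (Nat.factorial d : ℝ))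
        * ((l : ℝ) ^ (e - d))⁻¹) atTop (nhds 0) := by
    have := ((lim_one c d).mul_const ((Nat.factorial e : ℝ) / (Nat.factorial d : ℝ))).mul h2
    simpa using this
  refine h3.congr' ?_
  filter_upwards [eventually_ge_atTop 1] with l hl
  have hl0 : (l : ℝ) ≠ 0 := by
    simpa using (by omega : l ≠ 0)
  have hd : (Nat.factorial d : ℝ) ≠ 0 := by exact_mod_cast Nat.factorial_ne_zero d
  have hpow : (l : ℝ) ^ e = (l : ℝ) ^ d * (l : ℝ) ^ (e - d) := by
    rw [← pow_add]
    congr 1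
    omega
  rw [hpow]
  field_simp

lemma fact1 (n r k : ℕ) (hn : 1 ≤ n) (hr : 1 ≤ r) (l : ℕ) :
    (∑ i ∈ Icc k (k + l), (i + n - 1).choose (n - 1) * (k + l - i + r - 1).choose (r - 1))
      + ∑ j ∈ range k, (j + (n - 1)).choose (n - 1) * (l + k - j + (r - 1)).choose (r - 1)
    = (l + (k + (n + r - 1))).choose (n + r - 1) := by
  have hv := vand (n - 1) (r - 1) (l + k)
  have e1 : l + k + (n - 1) + (r - 1) + 1 = l + (k + (n + r - 1)) := by omega
  have e2 : (n - 1) + (r - 1) + 1 = n + r - 1 := by omega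
  have e3 : l + k + 1 = k + (l + 1) := by omega
  rw [e1, e2, e3, sum_range_add] at hv
  rw [← hv]
  have e4 : ∑ i ∈ Icc k (k + l), (i + n - 1).choose (n - 1) * (k + l - i + r - 1).choose (r - 1)
      = ∑ j ∈ range (l + 1),
          (k + j + (n - 1)).choose (n - 1) * (l + k - (k + j) + (r - 1)).choose (r - 1) := by
    rw [← Finset.Ico_add_one_right_eq_Icc, sum_Ico_eq_sum_range]
    apply sum_congr (by congr 1; omega)
    intro j hj
    rw [mem_range] at hj
    rw [show k + j + n - 1 = k + j + (n - 1) from by omega,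
      show k + l - (k + j) + r - 1 = l + k - (k + j) + (r - 1) from by omega]
  rw [e4]
  omega

lemma fact2 (n r k : ℕ) (hn : 1 ≤ n) (hr : 1 ≤ r) (l : ℕ) (hl : 1 ≤ l) :
    (∑ i ∈ Icc k (k + l - 1), (i + n - 1).choose (n - 1) * (k + l - i + r - 2).choose (r - 1))
      + ∑ j ∈ range k, (j + (n - 1)).choose (n - 1) * (l - 1 + k - j + (r - 1)).choose (r - 1)
    = (l + (k + (n + r - 1) - 1)).choose (n + r - 1) := by
  have h := fact1 n r k hn hr (l - 1)
  have e1 : l - 1 + (k + (n + r - 1)) = l + (k + (n + r - 1) - 1) := by omega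
  rw [e1] at h
  rw [← h]
  congr 1
  apply sum_congr (by congr 1; omega)
  intro i hi
  rw [mem_Icc] at hi
  rw [show k + l - i + r - 2 = k + (l - 1) - i + r - 1 from by omega]

lemma fact3 (n r k : ℕ) (hr : 1 ≤ r) (x l : ℕ) (hx : x ≤ l) :
    ∑ j ∈ range k, (j + (n - 1)).choose (n - 1) * (x + k - j + (r - 1)).choose (r - 1)
      ≤ (∑ j ∈ range k, (j + (n - 1)).choose (n - 1)) * (l + (k + r - 1)).choose (r - 1) := by
  rw [sum_mul]
  apply sum_le_sum
  intro j hj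
  exact Nat.mul_le_mul_left _ (Nat.choose_le_choose _ (by omega))

/-- The dimension of the `l`-th symbol of the pseudogroup of lifted point transformations on
`J^k π`, for a rank-`r` bundle `π` over an `n`-dimensional base, computed from the splitting
`g^l = g^l_H ⊕ g^l_V`. -/
def liftedSymbolDim (n r k l : ℕ) : ℕ :=
  n * (Nat.choose (l + r - 1) (r - 1)
      + (∑ i ∈ Finset.Icc 1 (k - 1), Nat.choose (i + n - 1) (n - 1)) *
          Nat.choose (l + r - 2) (r - 1)
      + ∑ i ∈ Finset.Icc k (k + l - 1),
          Nat.choose (i + n - 1) (n - 1) * Nat.choose (k + l - i + r - 2) (r - 1))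
  + r * ((∑ i ∈ Finset.Icc 0 (k - 1), Nat.choose (i + n - 1) (n - 1)) *
          Nat.choose (l + r - 1) (r - 1)
      + ∑ i ∈ Finset.Icc k (k + l),
          Nat.choose (i + n - 1) (n - 1) * Nat.choose (k + l - i + r - 1) (r - 1))

/-- Asymptotics of the symbol dimensions of the pseudogroup of lifted point transformations:
`dim g^l ~ n₀ · l^(n₀-1)/(n₀-1)!` with `n₀ = n + r = dim J⁰π`. -/
theorem liftedSymbolDim_asymptotic (n r k : ℕ) (hn : 1 ≤ n) (hr : 1 ≤ r) (hk : 1 ≤ k) :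
    Tendsto (fun l : ℕ =>
        (liftedSymbolDim n r k l : ℝ) * (Nat.factorial (n + r - 1) : ℝ) /
          (l : ℝ) ^ (n + r - 1))
      atTop (nhds ((n : ℝ) + r)) := by
  have hrm : r - 1 < n + r - 1 := by omega
  set M := n + r - 1 with hM
  set A := ∑ i ∈ Finset.Icc 1 (k - 1), Nat.choose (i + n - 1) (n - 1) with hA
  set B := ∑ i ∈ Finset.Icc 0 (k - 1), Nat.choose (i + n - 1) (n - 1) with hB
  set K := ∑ j ∈ range k, (j + (n - 1)).choose (n - 1) with hK
  have hw : ∀ l : ℕ, (0 : ℝ) ≤ (Nat.factorial M : ℝ) / (l : ℝ) ^ M := fun l => by positivity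
  have hQ1 := lim_one (k + M - 1) M
  have hQ2 := lim_one (k + M) M
  have hP0 := lim_zero (r - 1) (r - 1) M hrm
  have hP1 := lim_zero (k + r - 1) (r - 1) M hrm
  simp only [mul_div_assoc] at hQ1 hQ2 hP0 hP1
  -- u1
  have hu1 : Tendsto (fun l : ℕ =>
      (n : ℝ) * (((l + r - 1).choose (r - 1) : ℝ) * ((Nat.factorial M : ℝ) / (l : ℝ) ^ M)))
      atTop (nhds 0) := by
    have h := hP0.const_mul (n : ℝ)
    rw [mul_zero] at h
    refine Tendsto.congr (fun l => ?_) h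
    rw [show l + r - 1 = l + (r - 1) from by omega]
  -- u4
  have hu4 : Tendsto (fun l : ℕ =>
      (r : ℝ) * (B : ℝ) * (((l + r - 1).choose (r - 1) : ℝ) *
        ((Nat.factorial M : ℝ) / (l : ℝ) ^ M)))
      atTop (nhds 0) := by
    have h := hP0.const_mul ((r : ℝ) * (B : ℝ))
    rw [mul_zero] at h
    refine Tendsto.congr (fun l => ?_) h
    rw [show l + r - 1 = l + (r - 1) from by omega]
  -- u2
  have hu2 : Tendsto (fun l : ℕ =>
      (n : ℝ) * (A : ℝ) * (((l + r - 2).choose (r - 1) : ℝ) *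
        ((Nat.factorial M : ℝ) / (l : ℝ) ^ M)))
      atTop (nhds 0) := by
    have h := hP0.const_mul ((n : ℝ) * (A : ℝ))
    rw [mul_zero] at h
    apply squeeze_zero (fun l => by positivity) ?_ h
    intro l
    have hc : ((l + r - 2).choose (r - 1) : ℝ) ≤ ((l + (r - 1)).choose (r - 1) : ℝ) := by
      exact_mod_cast Nat.choose_le_choose _ (by omega : l + r - 2 ≤ l + (r - 1))
    exact mul_le_mul_of_nonneg_left (mul_le_mul_of_nonneg_right hc (hw l)) (by positivity)
  -- u3
  have hu3 : Tendsto (fun l : ℕ =>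
      (n : ℝ) * (((∑ i ∈ Finset.Icc k (k + l - 1),
          Nat.choose (i + n - 1) (n - 1) * Nat.choose (k + l - i + r - 2) (r - 1) : ℕ) : ℝ) *
        ((Nat.factorial M : ℝ) / (l : ℝ) ^ M)))
      atTop (nhds (n : ℝ)) := by
    have hlow : Tendsto (fun l : ℕ =>
        (n : ℝ) * (((l + (k + M - 1)).choose M : ℝ) * ((Nat.factorial M : ℝ) / (l : ℝ) ^ M))
          - (n : ℝ) * (K : ℝ) * (((l + (k + r - 1)).choose (r - 1) : ℝ) *
            ((Nat.factorial M : ℝ) / (l : ℝ) ^ M)))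
        atTop (nhds (n : ℝ)) := by
      have h := (hQ1.const_mul (n : ℝ)).sub (hP1.const_mul ((n : ℝ) * (K : ℝ)))
      rwa [mul_one, mul_zero, sub_zero] at h
    have hup : Tendsto (fun l : ℕ =>
        (n : ℝ) * (((l + (k + M - 1)).choose M : ℝ) * ((Nat.factorial M : ℝ) / (l : ℝ) ^ M)))
        atTop (nhds (n : ℝ)) := by
      have h := hQ1.const_mul (n : ℝ)
      rwa [mul_one] at h
    refine tendsto_of_tendsto_of_tendsto_of_le_of_le' hlow hup ?_ ?_
    · filter_upwards [eventually_ge_atTop 1] with l hl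
      have hfa := fact2 n r k hn hr l hl
      have hfb := fact3 n r k hr (l - 1) l (by omega)
      rw [← hK] at hfb
      rw [← hM] at hfa
      have key : ((l + (k + M - 1)).choose M : ℝ)
          ≤ ((∑ i ∈ Finset.Icc k (k + l - 1),
              Nat.choose (i + n - 1) (n - 1) * Nat.choose (k + l - i + r - 2) (r - 1) : ℕ) : ℝ)
            + (K : ℝ) * (((l + (k + r - 1)).choose (r - 1) : ℕ) : ℝ) := by
        exact_mod_cast (by omega : (l + (k + M - 1)).choose M
          ≤ (∑ i ∈ Finset.Icc k (k + l - 1),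
              Nat.choose (i + n - 1) (n - 1) * Nat.choose (k + l - i + r - 2) (r - 1))
            + K * (l + (k + r - 1)).choose (r - 1))
      have key2 := mul_le_mul_of_nonneg_left (mul_le_mul_of_nonneg_right key (hw l))
        (show (0 : ℝ) ≤ (n : ℝ) by positivity)
      nlinarith [key2]
    · filter_upwards [eventually_ge_atTop 1] with l hl
      have hfa := fact2 n r k hn hr l hl
      rw [← hM] at hfa
      have key : ((∑ i ∈ Finset.Icc k (k + l - 1),
          Nat.choose (i + n - 1) (n - 1) * Nat.choose (k + l - i + r - 2) (r - 1) : ℕ) : ℝ)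
          ≤ ((l + (k + M - 1)).choose M : ℝ) := by
        exact_mod_cast (by omega : _ ≤ (l + (k + M - 1)).choose M)
      exact mul_le_mul_of_nonneg_left (mul_le_mul_of_nonneg_right key (hw l))
        (by positivity)
  -- u5
  have hu5 : Tendsto (fun l : ℕ =>
      (r : ℝ) * (((∑ i ∈ Finset.Icc k (k + l),
          Nat.choose (i + n - 1) (n - 1) * Nat.choose (k + l - i + r - 1) (r - 1) : ℕ) : ℝ) *
        ((Nat.factorial M : ℝ) / (l : ℝ) ^ M)))
      atTop (nhds (r : ℝ)) := by
    have hlow : Tendsto (fun l : ℕ =>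
        (r : ℝ) * (((l + (k + M)).choose M : ℝ) * ((Nat.factorial M : ℝ) / (l : ℝ) ^ M))
          - (r : ℝ) * (K : ℝ) * (((l + (k + r - 1)).choose (r - 1) : ℝ) *
            ((Nat.factorial M : ℝ) / (l : ℝ) ^ M)))
        atTop (nhds (r : ℝ)) := by
      have h := (hQ2.const_mul (r : ℝ)).sub (hP1.const_mul ((r : ℝ) * (K : ℝ)))
      rwa [mul_one, mul_zero, sub_zero] at h
    have hup : Tendsto (fun l : ℕ =>
        (r : ℝ) * (((l + (k + M)).choose M : ℝ) * ((Nat.factorial M : ℝ) / (l : ℝ) ^ M)))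
        atTop (nhds (r : ℝ)) := by
      have h := hQ2.const_mul (r : ℝ)
      rwa [mul_one] at h
    refine tendsto_of_tendsto_of_tendsto_of_le_of_le' hlow hup ?_ ?_
    · filter_upwards [] with l
      have hfa := fact1 n r k hn hr l
      have hfb := fact3 n r k hr l l le_rfl
      rw [← hK] at hfb
      rw [← hM] at hfa
      have key : ((l + (k + M)).choose M : ℝ)
          ≤ ((∑ i ∈ Finset.Icc k (k + l),
              Nat.choose (i + n - 1) (n - 1) * Nat.choose (k + l - i + r - 1) (r - 1) : ℕ) : ℝ)
            + (K : ℝ) * (((l + (k + r - 1)).choose (r - 1) : ℕ) : ℝ) := by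
        exact_mod_cast (by omega : (l + (k + M)).choose M
          ≤ (∑ i ∈ Finset.Icc k (k + l),
              Nat.choose (i + n - 1) (n - 1) * Nat.choose (k + l - i + r - 1) (r - 1))
            + K * (l + (k + r - 1)).choose (r - 1))
      have key2 := mul_le_mul_of_nonneg_left (mul_le_mul_of_nonneg_right key (hw l))
        (show (0 : ℝ) ≤ (r : ℝ) by positivity)
      nlinarith [key2]
    · filter_upwards [] with l
      have hfa := fact1 n r k hn hr l
      rw [← hM] at hfa
      have key : ((∑ i ∈ Finset.Icc k (k + l),
          Nat.choose (i + n - 1) (n - 1) * Nat.choose (k + l - i + r - 1) (r - 1) : ℕ) : ℝ)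
          ≤ ((l + (k + M)).choose M : ℝ) := by
        exact_mod_cast (by omega : _ ≤ (l + (k + M)).choose M)
      exact mul_le_mul_of_nonneg_left (mul_le_mul_of_nonneg_right key (hw l))
        (by positivity)
  -- combine
  have hsum := ((((hu1.add hu2).add hu3).add hu4).add hu5)
  simp only [zero_add, add_zero] at hsum
  refine Tendsto.congr (fun l => ?_) hsum
  simp only [liftedSymbolDim, ← hA, ← hB, ← hM]
  push_cast
  ring
end
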